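/- arXiv:1810.03559 — 8 statements merged into one kernel-verified Lean document; each statement's English description precedes it below -/
import Mathlib

section
/- For sets X, Y ⊆ ℕ with X, Y both nonempty and both co-nonempty, F_X ≤_c F_Y if and only if X ≤_m Y or (complement of X) ≤_m Y. -/
/-- Computable reducibility between binary relations on ℕ: `R ≤_c S`. -/
def CRed (R S : ℕ → ℕ → Prop) : Prop :=
  ∃ f : ℕ → ℕ, Computable f ∧ ∀ x y, R x y ↔ S (f x) (f y)

/-- `R` has infinitely many equivalence classes. -/
def InfClasses (R : ℕ → ℕ → Prop) : Prop :=
  ∀ F : Finset ℕ, ∃ z, ∀ x ∈ F, ¬ R z x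

/-- `R` has an infinite computably enumerable transversal. -/
def HasCeTransversal (R : ℕ → ℕ → Prop) : Prop :=
  ∃ A : Set ℕ, A.Infinite ∧ REPred (· ∈ A) ∧ ∀ x ∈ A, ∀ y ∈ A, x ≠ y → ¬ R x y

/-- `R` is dark: infinitely many classes but no infinite c.e. transversal. -/
def Dark (R : ℕ → ℕ → Prop) : Prop := InfClasses R ∧ ¬ HasCeTransversal R

/-!
A reduction `f` of `F_X` to `F_Y` maps the two classes of `F_X` into distinct classes of `F_Y`, so
`f` reduces `X` to `Y` when `0` and `f 0` lie on the same side, and `Xᶜ` to `Y` otherwise.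
Conversely a many-one reduction of `X`, or of `Xᶜ`, to `Y` preserves for every pair whether its
points lie on the same side.
-/

section

variable {p q : ℕ → Prop}

theorem ManyOneReducible.cRed (h : ManyOneReducible p q) :
    CRed (fun x y => p x ↔ p y) (fun x y => q x ↔ q y) := by
  obtain ⟨f, hf, hpq⟩ := h
  exact ⟨f, hf, fun x y => iff_congr (hpq x) (hpq y)⟩

theorem ManyOneReducible.cRed_of_not (h : ManyOneReducible (fun x => ¬ p x) q) :
    CRed (fun x y => p x ↔ p y) (fun x y => q x ↔ q y) := by
  simpa only [not_iff_not] using h.cRed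

theorem CRed.manyOneReducible_or_not
    (h : CRed (fun x y => p x ↔ p y) (fun x y => q x ↔ q y)) :
    ManyOneReducible p q ∨ ManyOneReducible (fun x => ¬ p x) q := by
  obtain ⟨f, hf, hpq⟩ := h
  by_cases h0 : p 0 ↔ q (f 0)
  · exact .inl ⟨f, hf, fun x => by have := hpq x 0; tauto⟩
  · exact .inr ⟨f, hf, fun x => by have := hpq x 0; tauto⟩

theorem cRed_iff_manyOneReducible_or_not :
    CRed (fun x y => p x ↔ p y) (fun x y => q x ↔ q y) ↔
      ManyOneReducible p q ∨ ManyOneReducible (fun x => ¬ p x) q :=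
  ⟨CRed.manyOneReducible_or_not, fun h => h.elim (·.cRed) (·.cRed_of_not)⟩

end

theorem FX_cRed_FY_iff_general (X Y : Set ℕ) :
    CRed (fun x y => x ∈ X ↔ y ∈ X) (fun x y => x ∈ Y ↔ y ∈ Y) ↔
      ManyOneReducible (· ∈ X) (· ∈ Y) ∨ ManyOneReducible (· ∈ Xᶜ) (· ∈ Y) :=
  cRed_iff_manyOneReducible_or_not

theorem FX_cRed_FY_iff (X Y : Set ℕ) (hX : X.Nonempty) (hXc : Xᶜ.Nonempty)
    (hY : Y.Nonempty) (hYc : Yᶜ.Nonempty) :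
    CRed (fun x y => x ∈ X ↔ y ∈ X) (fun x y => x ∈ Y ↔ y ∈ Y) ↔
      ManyOneReducible (· ∈ X) (· ∈ Y) ∨ ManyOneReducible (· ∈ Xᶜ) (· ∈ Y) :=
  FX_cRed_FY_iff_general X Y
end

section
/- (Inversion Lemma) Suppose R and S are equivalence relations on ℕ with S computably enumerable, and f is a computable reduction of R to S whose range intersects every S-equivalence class. Then S ≤_c R. -/
/-!
Since `S` is c.e. and every `S`-class meets the range of `f`, a dovetailed search finds, for
each `y`, some `x` with `f x S y`. The resulting `g` is computable, and since `f (g y) S y`,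
`g x R g y ↔ f (g x) S f (g y) ↔ x S y`.
-/
open Encodable
open Nat.Partrec (Code)
open Nat.Partrec.Code

theorem REPred.comp {α β : Type*} [Primcodable α] [Primcodable β] {p : β → Prop} (hp : REPred p)
    {f : α → β} (hf : Computable f) : REPred fun a => p (f a) :=
  Partrec.comp hp hf

theorem REPred.exists_code {α : Type*} [Primcodable α] {p : α → Prop} (hp : REPred p) :
    ∃ c : Code, ∀ a, p a ↔ (eval c (encode a)).Dom := by
  obtain ⟨c, hc⟩ := Code.exists_code.1 hp
  refine ⟨c, fun a => ?_⟩
  simp only [hc, encodek, Part.coe_some, Part.bind_some, Part.map_Dom]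
  exact ⟨fun h => ⟨h, trivial⟩, fun h => h.fst⟩

theorem REPred.exists_computable_choice {α β : Type*} [Primcodable α] [Primcodable β]
    {P : α → β → Prop} (hP : REPred fun p : α × β => P p.1 p.2) (hex : ∀ a, ∃ b, P a b) :
    ∃ g : α → β, Computable g ∧ ∀ a, P a (g a) := by
  obtain ⟨c, hc⟩ := hP.exists_code
  -- search stage `n` tests the candidate `b` for `k` steps, where `(b, k)` is decoded from `n`
  let search (a : α) (n : ℕ) : Option β := (decode n : Option (β × ℕ)).bind fun q =>
    (evaln q.2 c (encode (a, q.1))).map fun _ => q.1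
  have hsearch : Computable₂ search := by
    have hstage : Primrec₂ fun (an : α × ℕ) (q : β × ℕ) =>
        (evaln q.2 c (encode (an.1, q.1))).map fun _ => q.1 :=
      Primrec.option_map
        (primrec_evaln.comp (((Primrec.snd.comp Primrec.snd).pair (Primrec.const c)).pair
          (Primrec.encode.comp
            ((Primrec.fst.comp Primrec.fst).pair (Primrec.fst.comp Primrec.snd)))))
        (Primrec.fst.comp (Primrec.snd.comp Primrec.fst)).to₂
    exact (Primrec.option_bind ((Primrec.decode (α := β × ℕ)).comp Primrec.snd) hstage).to_comp.to₂
  have sound : ∀ a, ∀ b ∈ Nat.rfindOpt (search a), P a b := by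
    intro a b hb
    obtain ⟨n, hn⟩ := Nat.rfindOpt_spec hb
    simp only [search, Option.mem_def, Option.bind_eq_some_iff, Option.map_eq_some_iff] at hn
    obtain ⟨⟨b, k⟩, -, y, hy, rfl⟩ := hn
    exact (hc (a, b)).2 (Part.dom_iff_mem.2 ⟨y, evaln_sound hy⟩)
  have total : ∀ a, (Nat.rfindOpt (search a)).Dom := by
    intro a
    obtain ⟨b, hb⟩ := hex a
    obtain ⟨y, hy⟩ := Part.dom_iff_mem.1 ((hc (a, b)).1 hb)
    obtain ⟨k, hk⟩ := evaln_complete.1 hy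
    exact Nat.rfindOpt_dom.2 ⟨encode (b, k), b, by
      simp only [search, encodek, Option.bind_some, Option.mem_def, Option.map_eq_some_iff]
      exact ⟨y, hk, trivial⟩⟩
  exact ⟨fun a => (Nat.rfindOpt (search a)).get (total a),
    (Partrec.rfindOpt hsearch).of_eq_tot fun a => Part.get_mem _,
    fun a => sound a _ (Part.get_mem _)⟩

theorem inversion_lemma_general (R S : ℕ → ℕ → Prop) (hS : Equivalence S)
    (hSce : REPred (fun p : ℕ × ℕ => S p.1 p.2))
    (f : ℕ → ℕ) (hf : Computable f) (hred : ∀ x y, R x y ↔ S (f x) (f y))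
    (honto : ∀ y, ∃ x, S (f x) y) :
    CRed S R := by
  have hpreimage : REPred fun p : ℕ × ℕ => S (f p.2) p.1 :=
    hSce.comp ((hf.comp Computable.snd).pair Computable.fst)
  obtain ⟨g, hg, hfg⟩ := REPred.exists_computable_choice (P := fun y x => S (f x) y) hpreimage honto
  refine ⟨g, hg, fun x y => ?_⟩
  rw [hred]
  exact ⟨fun h => hS.trans (hfg x) (hS.trans h (hS.symm (hfg y))),
    fun h => hS.trans (hS.symm (hfg x)) (hS.trans h (hfg y))⟩

theorem inversion_lemma (R S : ℕ → ℕ → Prop) (hR : Equivalence R) (hS : Equivalence S)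
    (hSce : REPred (fun p : ℕ × ℕ => S p.1 p.2))
    (f : ℕ → ℕ) (hf : Computable f) (hred : ∀ x y, R x y ↔ S (f x) (f y))
    (honto : ∀ y, ∃ x, S (f x) y) :
    CRed S R :=
  inversion_lemma_general R S hS hSce f hf hred honto
end

section
/- An equivalence relation R on ℕ with infinitely many classes is light if and only if R has an infinite computably enumerable transversal (an infinite c.e. set A such that any two distinct elements of A are R-inequivalent). -/
/-!
A computable reduction `f` of `=` to `R` is injective, so its range is an infinite c.e. set of
pairwise `R`-inequivalent numbers. Conversely, an infinite c.e. set `A` admits a computable strictly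
increasing enumeration: from `a`, search for a halting witness of some element of `A` above `a`,
and iterate. Since `R` is reflexive, an injective enumeration of a transversal reduces `=` to `R`.
-/

open Nat.Partrec (Code)
open Computable Encodable

theorem ComputablePred.rePred_exists {α : Type*} [Primcodable α] {P : α → ℕ → Prop}
    (hP : ComputablePred fun q : α × ℕ => P q.1 q.2) : REPred fun a => ∃ n, P a n := by
  classical
  have hsearch : Partrec fun a => Nat.rfind fun n => (decide (P a n) : Part Bool) :=
    Partrec.rfind hP.decide.partrec
  refine hsearch.dom_re.of_eq fun a => ?_
  constructor
  · intro h
    exact ⟨_, of_decide_eq_true (Part.mem_some_iff.1 (Nat.rfind_spec ⟨h, rfl⟩)).symm⟩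
  · rintro ⟨n, hn⟩
    obtain ⟨m, hm, -⟩ := Nat.rfind_min' (p := fun n => decide (P a n)) (decide_eq_true hn)
    exact Part.dom_iff_mem.2 ⟨m, hm⟩

theorem REPred.exists_computablePred_iff_exists {α : Type*} [Primcodable α] {p : α → Prop}
    (hp : REPred p) :
    ∃ P : α → ℕ → Prop, ComputablePred (fun q : α × ℕ => P q.1 q.2) ∧ ∀ a, p a ↔ ∃ k, P a k := by
  obtain ⟨c, hc⟩ := Code.exists_code.1 (Partrec.bind_decode₂_iff.1 hp)
  -- `P a k`: the program `c` halts on `a` within `k` steps.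
  refine ⟨fun a k => (Code.evaln k c (encode a)).isSome, ?_, fun a => ?_⟩
  · refine ComputablePred.computable_iff.2 ⟨_, ?_, rfl⟩
    exact (Primrec.option_isSome.comp <| Code.primrec_evaln.comp <|
      (Primrec.snd.pair (Primrec.const c)).pair (Primrec.encode.comp Primrec.fst)).to_comp
  · have : p a ↔ (Code.eval c (encode a)).Dom := by
      simp only [hc, decode₂_encode, Part.coe_some, Part.bind_some, Part.map_Dom]
      exact ⟨fun h => ⟨h, trivial⟩, fun h => h.1⟩
    simp only [this, Part.dom_iff_mem, Code.evaln_complete, Option.isSome_iff_exists]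
    exact exists_comm

theorem Computable.rePred_mem_range {α : Type*} [Primcodable α] [DecidableEq α] {f : ℕ → α}
    (hf : Computable f) : REPred (· ∈ Set.range f) :=
  ComputablePred.rePred_exists (P := fun a n => f n = a)
    (Primrec.eq.decide.to_comp.comp (hf.comp snd) fst).computablePred

theorem Set.Infinite.exists_computable_gt_mem {A : Set ℕ} (hA : A.Infinite)
    (hre : REPred (· ∈ A)) : ∃ g : ℕ → ℕ, Computable g ∧ ∀ a, g a ∈ A ∧ a < g a := by
  classical
  obtain ⟨P, hP, hPA⟩ := hre.exists_computablePred_iff_exists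
  -- `m` encodes a pair `(b, k)` where `k` witnesses `b ∈ A`.
  let Q : ℕ → ℕ → Prop := fun a m => P m.unpair.1 m.unpair.2 ∧ a < m.unpair.1
  have hQ : ComputablePred fun q : ℕ × ℕ => Q q.1 q.2 := by
    have hP' : Computable fun q : ℕ × ℕ => decide (P q.2.unpair.1 q.2.unpair.2) :=
      hP.decide.comp (Primrec.unpair.to_comp.comp snd)
    have hlt : Computable fun q : ℕ × ℕ => decide (q.1 < q.2.unpair.1) :=
      Primrec.nat_lt.decide.to_comp.comp fst
        (Primrec.fst.comp (Primrec.unpair.comp Primrec.snd)).to_comp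
    exact Computable.computablePred ((Primrec.and.to_comp.comp hP' hlt).of_eq fun q => by simp [Q])
  have hQex : ∀ a, ∃ m, Q a m := fun a => by
    obtain ⟨b, hbA, hab⟩ := hA.exists_gt a
    obtain ⟨k, hk⟩ := (hPA b).1 hbA
    exact ⟨Nat.pair b k, by simpa [Q] using ⟨hk, hab⟩⟩
  refine ⟨fun a => (Nat.find (hQex a)).unpair.1,
    (Primrec.fst.comp Primrec.unpair).to_comp.comp (Computable.find hQ hQex), fun a => ?_⟩
  obtain ⟨hwit, hgt⟩ := Nat.find_spec (hQex a)
  exact ⟨(hPA _).2 ⟨_, hwit⟩, hgt⟩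

theorem Set.Infinite.exists_computable_strictMono_mem {A : Set ℕ} (hA : A.Infinite)
    (hre : REPred (· ∈ A)) : ∃ f : ℕ → ℕ, Computable f ∧ StrictMono f ∧ ∀ n, f n ∈ A := by
  obtain ⟨g, hg, hgA⟩ := hA.exists_computable_gt_mem hre
  let f : ℕ → ℕ := fun n => Nat.rec (g 0) (fun _ ih => g ih) n
  have hfA : ∀ n, f n ∈ A
    | 0 => (hgA 0).1
    | n + 1 => (hgA (f n)).1
  exact ⟨f, Computable.nat_rec .id (.const (g 0)) (hg.comp (snd.comp snd)).to₂,
    strictMono_nat_of_lt_succ fun n => (hgA (f n)).2, hfA⟩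

theorem hasCeTransversal_of_cRed_eq {R : ℕ → ℕ → Prop} (h : CRed Eq R) : HasCeTransversal R := by
  obtain ⟨f, hf, hfR⟩ := h
  have hinj : Function.Injective f := fun x y hxy =>
    (hfR x y).2 (hxy ▸ (hfR x x).1 rfl)
  refine ⟨Set.range f, Set.infinite_range_of_injective hinj, hf.rePred_mem_range, ?_⟩
  rintro _ ⟨a, rfl⟩ _ ⟨b, rfl⟩ hne hR
  exact hne (congrArg f ((hfR a b).2 hR))

theorem cRed_eq_of_hasCeTransversal {R : ℕ → ℕ → Prop} (hrefl : ∀ x, R x x)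
    (h : HasCeTransversal R) : CRed Eq R := by
  obtain ⟨A, hA, hre, htrans⟩ := h
  obtain ⟨f, hf, hmono, hfA⟩ := hA.exists_computable_strictMono_mem hre
  refine ⟨f, hf, fun x y => ⟨fun hxy => hxy ▸ hrefl (f x), fun hR => ?_⟩⟩
  by_contra hne
  exact htrans _ (hfA x) _ (hfA y) (hmono.injective.ne hne) hR

theorem light_iff_ce_transversal_general (R : ℕ → ℕ → Prop) (hR : Equivalence R) :
    CRed Eq R ↔ HasCeTransversal R :=
  ⟨hasCeTransversal_of_cRed_eq, cRed_eq_of_hasCeTransversal hR.refl⟩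

theorem light_iff_ce_transversal (R : ℕ → ℕ → Prop) (hR : Equivalence R)
    (hinf : InfClasses R) :
    CRed Eq R ↔ HasCeTransversal R :=
  light_iff_ce_transversal_general R hR
end

section
/- Let R be an equivalence relation on ℕ, let a, b be R-inequivalent with [b]_R a computable set. Then the collapse S := R_{col(a,b)} satisfies S ≤_c R, via the function sending x to x if x ∉ [b]_R and to a otherwise. -/
/-- The collapse of `R` at `(x, y)`: merge the classes of `x` and `y`. -/
def Collapse (R : ℕ → ℕ → Prop) (x y : ℕ) : ℕ → ℕ → Prop :=
  fun u v => R u v ∨ ((R u x ∨ R u y) ∧ (R v x ∨ R v y))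

/- Sending `[b]` to `a` and fixing the other points, both sides say: `x` and `y` are
`R`-related or both lie in `[a] ∪ [b]`. -/
theorem collapse_iff_rel_ite {R : ℕ → ℕ → Prop} (hR : Equivalence R) (a b x y : ℕ)
    [Decidable (R x b)] [Decidable (R y b)] :
    Collapse R a b x y ↔ R (if R x b then a else x) (if R y b then a else y) := by
  have := hR.refl; have := @hR.symm; have := @hR.trans
  unfold Collapse
  split_ifs <;> grind

open Classical in
theorem collapse_reduces_general (R : ℕ → ℕ → Prop) (hR : Equivalence R) (a b : ℕ)
    (hcomp : ComputablePred (fun x => R x b)) :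
    ∃ f : ℕ → ℕ, Computable f ∧ (∀ x, f x = if R x b then a else x) ∧
      ∀ x y, Collapse R a b x y ↔ R (f x) (f y) :=
  ⟨fun x => if R x b then a else x, ComputablePred.ite (Computable.const a) Computable.id hcomp,
    fun _ => rfl, fun x y => collapse_iff_rel_ite hR a b x y⟩

open Classical in
theorem collapse_reduces (R : ℕ → ℕ → Prop) (hR : Equivalence R) (a b : ℕ)
    (hab : ¬ R a b) (hcomp : ComputablePred (fun x => R x b)) :
    ∃ f : ℕ → ℕ, Computable f ∧ (∀ x, f x = if R x b then a else x) ∧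
      ∀ x y, Collapse R a b x y ↔ R (f x) (f y) :=
  collapse_reduces_general R hR a b hcomp
end

section
/- Every dark equivalence relation R is self-full: every computable reduction f : R ≤_c R has range intersecting every R-equivalence class. -/
/-!
If the class of `y` missed the range of `f`, the orbit `y, f y, f² y, …` would be pairwise
`R`-inequivalent: since `f` reflects `R`, a relation `f^[n] y R f^[m] y` with `n < m` cancels
to `y R f (f^[m-n-1] y)`. The orbit is computable, so its range would be an infinite c.e.
transversal, which a dark relation does not have.
-/

theorem Computable.iterate {α : Type*} [Primcodable α] {f : α → α} (hf : Computable f) (a : α) :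
    Computable fun n => f^[n] a :=
  (Computable.nat_rec Computable.id (Computable.const a)
    (hf.comp (Computable.snd.comp Computable.snd)).to₂).of_eq fun n => by
      induction n with
      | zero => rfl
      | succ n ih => simpa [Function.iterate_succ_apply'] using congrArg f ih

theorem REPred.mem_range {α : Type*} [Primcodable α] [DecidableEq α] {g : ℕ → α}
    (hg : Computable g) : REPred (· ∈ Set.range g) := by
  have hsearch : Computable₂ fun (a : α) (n : ℕ) => decide (g n = a) :=
    (Primrec.eq.decide.to_comp.comp (hg.comp Computable.snd) Computable.fst).to₂
  refine (Partrec.rfind hsearch.partrec₂).dom_re.of_eq fun a => ?_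
  simp [Nat.rfind_dom]

theorem hasCeTransversal_of_pairwise {R : ℕ → ℕ → Prop} {g : ℕ → ℕ} (hrefl : ∀ x, R x x)
    (hg : Computable g) (hpair : Pairwise fun m n => ¬ R (g m) (g n)) : HasCeTransversal R := by
  have hinj : Function.Injective g := fun m n hmn => by
    by_contra hne
    exact hpair hne (hmn ▸ hrefl (g m))
  refine ⟨Set.range g, Set.infinite_range_of_injective hinj, REPred.mem_range hg, ?_⟩
  rintro _ ⟨m, rfl⟩ _ ⟨n, rfl⟩ hne
  exact hpair fun hmn => hne (congrArg g hmn)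

section Orbit

variable {α : Type*} {R : α → α → Prop} {f : α → α}

theorem rel_iterate_iff (hred : ∀ x y, R x y ↔ R (f x) (f y)) (k : ℕ) (a b : α) :
    R (f^[k] a) (f^[k] b) ↔ R a b := by
  induction k generalizing a b with
  | zero => rfl
  | succ k ih => rw [Function.iterate_succ_apply, Function.iterate_succ_apply, ih, ← hred]

theorem not_rel_iterate_of_lt (hred : ∀ x y, R x y ↔ R (f x) (f y)) {y : α}
    (hy : ∀ x, ¬ R (f x) y) {m n : ℕ} (hnm : n < m) : ¬ R (f^[m] y) (f^[n] y) := by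
  obtain ⟨d, rfl⟩ : ∃ d, m = n + (d + 1) := ⟨m - n - 1, by omega⟩
  rw [Function.iterate_add_apply, rel_iterate_iff hred, Function.iterate_succ_apply']
  exact hy _

theorem pairwise_not_rel_iterate (hred : ∀ x y, R x y ↔ R (f x) (f y))
    (hsymm : ∀ ⦃a b⦄, R a b → R b a) {y : α} (hy : ∀ x, ¬ R (f x) y) :
    Pairwise fun m n => ¬ R (f^[m] y) (f^[n] y) := by
  intro m n hne
  rcases hne.lt_or_gt with hmn | hnm
  · exact fun h => not_rel_iterate_of_lt hred hy hmn (hsymm h)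
  · exact not_rel_iterate_of_lt hred hy hnm

end Orbit

theorem dark_selffull (R : ℕ → ℕ → Prop) (hR : Equivalence R) (hdark : Dark R)
    (f : ℕ → ℕ) (hf : Computable f) (hred : ∀ x y, R x y ↔ R (f x) (f y)) :
    ∀ y, ∃ x, R (f x) y := by
  intro y
  by_contra! hy
  exact hdark.2 <| hasCeTransversal_of_pairwise hR.refl (hf.iterate y)
    (pairwise_not_rel_iterate hred (fun _ _ => hR.symm) hy)
end

section
/- If R is a self-full equivalence relation, then R <_c R ⊕ Id₁, where R ⊕ Id₁ is the relation on ℕ with (2x)(R⊕Id₁)(2y) ↔ x R y, all odd numbers mutually equivalent, and no even number equivalent to an odd number. -/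
/-- `R ⊕ Id₁`: a copy of `R` on the even numbers, plus one fresh class (the odds). -/
def PlusOne (R : ℕ → ℕ → Prop) : ℕ → ℕ → Prop :=
  fun x y => (∃ a b, x = 2 * a ∧ y = 2 * b ∧ R a b) ∨ (Odd x ∧ Odd y)

/- The doubling map reduces `R` to `R ⊕ Id₁`. Conversely, composing a reduction `g` of `R ⊕ Id₁`
to `R` with doubling gives a self-reduction of `R` whose image misses the class of `g 1`, the
image of the fresh class; self-fullness forbids this. -/

def SelfFull (R : ℕ → ℕ → Prop) : Prop :=
  ∀ f : ℕ → ℕ, Computable f → (∀ x y, R x y ↔ R (f x) (f y)) → ∀ y, ∃ x, R (f x) y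

lemma computable_two_mul : Computable (fun x : ℕ => 2 * x) :=
  (Primrec.nat_mul.comp (Primrec.const 2) Primrec.id).to_comp

lemma not_odd_two_mul (x : ℕ) : ¬ Odd (2 * x) := by
  simp [Nat.odd_iff]

section PlusOne

variable {R : ℕ → ℕ → Prop}

@[simp]
lemma plusOne_two_mul_two_mul_iff {x y : ℕ} : PlusOne R (2 * x) (2 * y) ↔ R x y := by
  constructor
  · rintro (⟨a, b, ha, hb, h⟩ | ⟨hx, -⟩)
    · obtain rfl : x = a := by omega
      obtain rfl : y = b := by omega
      exact h
    · exact absurd hx (not_odd_two_mul x)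
  · exact fun h => Or.inl ⟨x, y, rfl, rfl, h⟩

lemma not_plusOne_two_mul_one (x : ℕ) : ¬ PlusOne R (2 * x) 1 := by
  rintro (⟨a, b, -, hb, -⟩ | ⟨hx, -⟩)
  · omega
  · exact not_odd_two_mul x hx

lemma cred_plusOne (R : ℕ → ℕ → Prop) : CRed R (PlusOne R) :=
  ⟨fun x => 2 * x, computable_two_mul, fun _ _ => plusOne_two_mul_two_mul_iff.symm⟩

lemma SelfFull.not_cred_plusOne (hsf : SelfFull R) : ¬ CRed (PlusOne R) R := by
  rintro ⟨g, hg, hiff⟩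
  have hself : ∀ x y, R x y ↔ R (g (2 * x)) (g (2 * y)) := fun x y => by
    rw [← hiff, plusOne_two_mul_two_mul_iff]
  obtain ⟨x, hx⟩ := hsf (fun x => g (2 * x)) (hg.comp computable_two_mul) hself (g 1)
  exact not_plusOne_two_mul_one x ((hiff (2 * x) 1).mpr hx)

end PlusOne

theorem selffull_lt_plusOne_general (R : ℕ → ℕ → Prop)
    (hsf : ∀ f : ℕ → ℕ, Computable f → (∀ x y, R x y ↔ R (f x) (f y)) →
      ∀ y, ∃ x, R (f x) y) :
    CRed R (PlusOne R) ∧ ¬ CRed (PlusOne R) R :=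
  ⟨cred_plusOne R, SelfFull.not_cred_plusOne hsf⟩

theorem selffull_lt_plusOne (R : ℕ → ℕ → Prop) (hR : Equivalence R)
    (hsf : ∀ f : ℕ → ℕ, Computable f → (∀ x y, R x y ↔ R (f x) (f y)) →
      ∀ y, ∃ x, R (f x) y) :
    CRed R (PlusOne R) ∧ ¬ CRed (PlusOne R) R :=
  selffull_lt_plusOne_general R hsf
end

section
/- For any equivalence relation R on ℕ and any z such that [z]_R is not a singleton, R ⊕ Id₁ ≡_c R_{[z]}, where R_{[z]} is obtained from R by splitting z off its class: x R_{[z]} y ↔ x = y ∨ (x R y ∧ z ∉ {x,y}). -/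
/-- The relation `R_{[z]}`, in which `z` is split off its `R`-class. -/
def splitOff (R : ℕ → ℕ → Prop) (z : ℕ) : ℕ → ℕ → Prop :=
  fun x y => x = y ∨ (R x y ∧ z ≠ x ∧ z ≠ y)

def plusOneToSplit (z y₀ x : ℕ) : ℕ :=
  if x % 2 = 1 then z else if x / 2 = z then y₀ else x / 2

def splitToPlusOne (z x : ℕ) : ℕ :=
  if x = z then 1 else 2 * x

section

variable {R : ℕ → ℕ → Prop}

theorem plusOne_two_mul_iff {a b : ℕ} : PlusOne R (2 * a) (2 * b) ↔ R a b := by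
  constructor
  · rintro (⟨c, d, hc, hd, h⟩ | ⟨ha, -⟩)
    · rwa [Nat.mul_left_cancel two_pos hc, Nat.mul_left_cancel two_pos hd]
    · exact absurd ha (by simp)
  · exact fun h => Or.inl ⟨a, b, rfl, rfl, h⟩

theorem plusOne_iff_of_odd_left {x y : ℕ} (hx : Odd x) : PlusOne R x y ↔ Odd y := by
  constructor
  · rintro (⟨a, b, rfl, -, -⟩ | ⟨-, hy⟩)
    · exact absurd hx (by simp)
    · exact hy
  · exact fun hy => Or.inr ⟨hx, hy⟩

theorem plusOne_iff_of_odd_right {x y : ℕ} (hy : Odd y) : PlusOne R x y ↔ Odd x := by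
  constructor
  · rintro (⟨a, b, -, rfl, -⟩ | ⟨hx, -⟩)
    · exact absurd hy (by simp)
    · exact hx
  · exact fun hx => Or.inr ⟨hx, hy⟩

theorem splitOff_iff_of_ne {z x y : ℕ} (hrefl : ∀ a, R a a) (hx : x ≠ z) (hy : y ≠ z) :
    splitOff R z x y ↔ R x y := by
  constructor
  · rintro (rfl | ⟨h, -, -⟩)
    · exact hrefl x
    · exact h
  · exact fun h => Or.inr ⟨h, hx.symm, hy.symm⟩

theorem splitOff_self_left_iff {z y : ℕ} : splitOff R z z y ↔ y = z := by
  simp [splitOff, eq_comm]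

theorem splitOff_self_right_iff {z x : ℕ} : splitOff R z x z ↔ x = z := by
  simp [splitOff]

theorem plusOneToSplit_two_mul (z y₀ a : ℕ) :
    plusOneToSplit z y₀ (2 * a) = if a = z then y₀ else a := by
  simp [plusOneToSplit]

theorem plusOneToSplit_two_mul_add_one (z y₀ a : ℕ) : plusOneToSplit z y₀ (2 * a + 1) = z := by
  simp [plusOneToSplit]

theorem plusOneToSplit_eq_iff_odd {z y₀ : ℕ} (hy₀ : y₀ ≠ z) (x : ℕ) :
    plusOneToSplit z y₀ x = z ↔ Odd x := by
  obtain ⟨a, rfl | rfl⟩ := Nat.even_or_odd' x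
  · rw [plusOneToSplit_two_mul]
    split_ifs with ha <;> simp_all
  · simp [plusOneToSplit_two_mul_add_one]

theorem splitToPlusOne_self (z : ℕ) : splitToPlusOne z z = 1 := if_pos rfl

theorem splitToPlusOne_of_ne {z x : ℕ} (hx : x ≠ z) : splitToPlusOne z x = 2 * x := if_neg hx

theorem odd_splitToPlusOne_iff {z x : ℕ} : Odd (splitToPlusOne z x) ↔ x = z := by
  unfold splitToPlusOne
  split_ifs with hx <;> simp [hx]

theorem computable_plusOneToSplit (z y₀ : ℕ) : Computable (plusOneToSplit z y₀) := by
  have half : Primrec fun x : ℕ => x / 2 := Primrec.nat_div.comp Primrec.id (Primrec.const 2)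
  refine Primrec.to_comp (Primrec.ite ?_ (Primrec.const z)
    (Primrec.ite ?_ (Primrec.const y₀) half))
  · exact Primrec.eq.comp (Primrec.nat_mod.comp Primrec.id (Primrec.const 2)) (Primrec.const 1)
  · exact Primrec.eq.comp half (Primrec.const z)

theorem computable_splitToPlusOne (z : ℕ) : Computable (splitToPlusOne z) :=
  Primrec.to_comp <| Primrec.ite (Primrec.eq.comp Primrec.id (Primrec.const z)) (Primrec.const 1)
    (Primrec.nat_mul.comp (Primrec.const 2) Primrec.id)

theorem plusOne_iff_splitOff_plusOneToSplit (hR : Equivalence R) {z y₀ : ℕ}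
    (hy₀ : y₀ ≠ z) (hRy₀ : R y₀ z) (x y : ℕ) :
    PlusOne R x y ↔ splitOff R z (plusOneToSplit z y₀ x) (plusOneToSplit z y₀ y) := by
  obtain ⟨a, rfl | rfl⟩ := Nat.even_or_odd' x
  · obtain ⟨b, rfl | rfl⟩ := Nat.even_or_odd' y
    · have hne : ∀ c, plusOneToSplit z y₀ (2 * c) ≠ z := fun c =>
        (plusOneToSplit_eq_iff_odd hy₀ _).not.mpr (by simp)
      have hrel : ∀ c, R (plusOneToSplit z y₀ (2 * c)) c := fun c => by
        rw [plusOneToSplit_two_mul]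
        split_ifs with hc
        · exact hc ▸ hRy₀
        · exact hR.refl c
      rw [plusOne_two_mul_iff, splitOff_iff_of_ne hR.refl (hne a) (hne b)]
      exact ⟨fun h => hR.trans (hrel a) (hR.trans h (hR.symm (hrel b))),
        fun h => hR.trans (hR.symm (hrel a)) (hR.trans h (hrel b))⟩
    · rw [plusOne_iff_of_odd_right (odd_two_mul_add_one b), plusOneToSplit_two_mul_add_one,
        splitOff_self_right_iff, plusOneToSplit_eq_iff_odd hy₀]
  · rw [plusOne_iff_of_odd_left (odd_two_mul_add_one a), plusOneToSplit_two_mul_add_one,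
      splitOff_self_left_iff, plusOneToSplit_eq_iff_odd hy₀]

theorem splitOff_iff_plusOne_splitToPlusOne (hrefl : ∀ a, R a a) (z x y : ℕ) :
    splitOff R z x y ↔ PlusOne R (splitToPlusOne z x) (splitToPlusOne z y) := by
  by_cases hx : x = z
  · rw [hx, splitOff_self_left_iff, splitToPlusOne_self, plusOne_iff_of_odd_left odd_one,
      odd_splitToPlusOne_iff]
  by_cases hy : y = z
  · rw [hy, splitOff_self_right_iff, splitToPlusOne_self, plusOne_iff_of_odd_right odd_one,
      odd_splitToPlusOne_iff]
  rw [splitOff_iff_of_ne hrefl hx hy, splitToPlusOne_of_ne hx, splitToPlusOne_of_ne hy,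
    plusOne_two_mul_iff]

end

theorem plusOne_equiv_split (R : ℕ → ℕ → Prop) (hR : Equivalence R) (z : ℕ)
    (hz : ∃ y, y ≠ z ∧ R y z) :
    CRed (PlusOne R) (fun x y => x = y ∨ (R x y ∧ z ≠ x ∧ z ≠ y)) ∧
    CRed (fun x y => x = y ∨ (R x y ∧ z ≠ x ∧ z ≠ y)) (PlusOne R) := by
  obtain ⟨y₀, hy₀, hRy₀⟩ := hz
  exact ⟨⟨plusOneToSplit z y₀, computable_plusOneToSplit z y₀,
      plusOne_iff_splitOff_plusOneToSplit hR hy₀ hRy₀⟩,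
    ⟨splitToPlusOne z, computable_splitToPlusOne z, splitOff_iff_plusOne_splitToPlusOne hR.refl z⟩⟩
end

section
/- Let R, S be equivalence relations on ℕ with infinitely many classes. If R is not S-dark (i.e., R has an infinite S-computably-enumerable transversal), then S ≤_{deg_T(S)} R, i.e., there is an S-computable function f with x S y ↔ f(x) R f(y). -/
/-- Partial functions on ℕ computable relative to an oracle `O : ℕ → ℕ`. -/
inductive RecIn (O : ℕ → ℕ) : (ℕ →. ℕ) → Prop
  | oracle : RecIn O (O : ℕ →. ℕ)
  | zero : RecIn O (pure 0)
  | succ : RecIn O ↑Nat.succ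
  | left : RecIn O ↑fun n : ℕ => n.unpair.1
  | right : RecIn O ↑fun n : ℕ => n.unpair.2
  | pair {f g} : RecIn O f → RecIn O g → RecIn O fun n => Nat.pair <$> f n <*> g n
  | comp {f g} : RecIn O f → RecIn O g → RecIn O fun n => g n >>= f
  | prec {f g} : RecIn O f → RecIn O g → RecIn O (Nat.unpaired fun a n =>
      n.rec (f a) fun y IH => do let i ← IH; g (Nat.pair a (Nat.pair y i)))
  | rfind {f} : RecIn O f → RecIn O fun a =>
      Nat.rfind fun n => (fun m => m = 0) <$> f (Nat.pair a n)

open Classical in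
/-- The characteristic function (on codes of pairs) of a binary relation on ℕ. -/
noncomputable def chi (R : ℕ → ℕ → Prop) : ℕ → ℕ :=
  fun n => if R n.unpair.1 n.unpair.2 then 1 else 0

/-- `A` is c.e. relative to the oracle `O`. -/
def CeIn (O : ℕ → ℕ) (A : Set ℕ) : Prop :=
  ∃ f : ℕ →. ℕ, RecIn O f ∧ ∀ n, A n ↔ (f n).Dom

/-- `R` is `O`-dark: infinitely many classes but no infinite `O`-c.e. transversal. -/
def DarkIn (O : ℕ → ℕ) (R : ℕ → ℕ → Prop) : Prop :=
  InfClasses R ∧ ¬ ∃ A : Set ℕ, A.Infinite ∧ CeIn O A ∧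
    ∀ x ∈ A, ∀ y ∈ A, x ≠ y → ¬ R x y

/-- `R` and `S` are mutually dark. -/
def MutuallyDark (R S : ℕ → ℕ → Prop) : Prop :=
  DarkIn (chi S) R ∧ DarkIn (chi R) S

/-! By the use principle, a set c.e. in the oracle `chi S` has the normal form
`m ∈ A ↔ ∃ w, p m w` with `p` decidable in `chi S`. Searching for witnesses above a given bound
then enumerates an infinite such `A` strictly increasingly by a `chi S`-computable `b`. Sending `x`
to the least element `m x` of its `S`-class is another `chi S`-computable search, with
`S x y ↔ m x = m y`; as `b` is injective with pairwise `R`-inequivalent values, `b ∘ m` reduces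
`S` to `R`. -/


namespace RecIn

variable {O : ℕ → ℕ}

theorem of_eq {f g : ℕ →. ℕ} (hf : RecIn O f) (e : ∀ n, f n = g n) : RecIn O g :=
  (funext e : f = g) ▸ hf

theorem of_partrec {f : ℕ →. ℕ} (hf : Nat.Partrec f) : RecIn O f := by
  induction hf with
  | zero => exact .zero
  | succ => exact .succ
  | left => exact .left
  | right => exact .right
  | pair _ _ ihf ihg => exact .pair ihf ihg
  | comp _ _ ihf ihg => exact .comp ihf ihg
  | prec _ _ ihf ihg => exact .prec ihf ihg
  | rfind _ ihf => exact .rfind ihf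

theorem of_computable {f : ℕ → ℕ} (hf : Computable f) : RecIn O ↑f :=
  of_partrec (Partrec.nat_iff.1 hf)

theorem total_comp {f g : ℕ → ℕ} (hf : RecIn O ↑f) (hg : RecIn O ↑g) :
    RecIn O ↑(fun n => f (g n)) :=
  (RecIn.comp hf hg).of_eq fun _ => Part.bind_some _ _

theorem total_pair {f g : ℕ → ℕ} (hf : RecIn O ↑f) (hg : RecIn O ↑g) :
    RecIn O ↑(fun n => Nat.pair (f n) (g n)) :=
  (RecIn.pair hf hg).of_eq fun n => by simp [PFun.coe_val, Seq.seq]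

theorem computable_comp {F : ℕ → ℕ} {g : ℕ → ℕ} (hF : Computable F) (hg : RecIn O ↑g) :
    RecIn O ↑(fun n => F (g n)) :=
  total_comp (of_computable hF) hg

theorem computable₂_comp {F : ℕ → ℕ → ℕ} {g : ℕ → ℕ} (hF : Computable₂ F) (hg : RecIn O ↑g) :
    RecIn O ↑(fun n => F n (g n)) :=
  (total_comp (of_computable (hF.comp (Computable.fst.comp Computable.unpair)
      (Computable.snd.comp Computable.unpair)))
    (total_pair (of_computable Computable.id) hg)).of_eq fun n => by simp [PFun.coe_val]

theorem comp_computable {f g : ℕ → ℕ} (hf : RecIn O ↑f) (hg : Computable g) :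
    RecIn O ↑(fun n => f (g n)) :=
  total_comp hf (of_computable hg)

theorem of_succ {g step : ℕ → ℕ} (hstep : RecIn O ↑step)
    (hg : ∀ k, g (k + 1) = step (Nat.pair k (g k))) : RecIn O ↑g := by
  have hrec := RecIn.prec (of_computable (Computable.const (g 0)))
    (comp_computable hstep (Computable.snd.comp Computable.unpair))
  refine (RecIn.comp hrec (of_computable
    (Primrec₂.natPair.comp (Primrec.const 0) Primrec.id).to_comp)).of_eq fun n => ?_
  simp only [PFun.coe_val, Part.bind_eq_bind, Part.bind_some, Nat.unpaired, Nat.unpair_pair, id]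
  induction n with
  | zero => rfl
  | succ k ih => simp only [ih, Part.bind_some, hg]

end RecIn

def DecidableIn (O : ℕ → ℕ) (p : ℕ → ℕ → Prop) : Prop :=
  ∃ t : ℕ → ℕ, RecIn O ↑t ∧ ∀ x n, t (Nat.pair x n) = 0 ↔ p x n

section DecidableIn

variable {O : ℕ → ℕ} {p : ℕ → ℕ → Prop}

theorem DecidableIn.exists_least (hp : DecidableIn O p) (h : ∀ x, ∃ n, p x n) :
    ∃ f : ℕ → ℕ, RecIn O ↑f ∧ ∀ x, p x (f x) ∧ ∀ n < f x, ¬ p x n := by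
  classical
  obtain ⟨t, ht, htp⟩ := hp
  refine ⟨fun x => Nat.find (h x), (RecIn.rfind ht).of_eq fun x => ?_,
    fun x => ⟨Nat.find_spec (h x), fun n hn => Nat.find_min (h x) hn⟩⟩
  rw [PFun.coe_val, Part.eq_some_iff]
  refine Nat.mem_rfind.2 ?_
  simp only [PFun.coe_val, Part.map_eq_map, Part.map_some, Part.mem_some_iff, htp]
  exact ⟨by simpa using Nat.find_spec (h x), fun hn => by simpa using Nat.find_min (h x) hn⟩

theorem decidableIn_chi (S : ℕ → ℕ → Prop) : DecidableIn (chi S) S := by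
  refine ⟨fun q => 1 - chi S q,
    RecIn.computable_comp (Primrec.nat_sub.comp (Primrec.const 1) Primrec.id).to_comp .oracle,
    fun x n => ?_⟩
  by_cases hS : S x n <;> simp [chi, hS]

theorem DecidableIn.exists_ge (hp : DecidableIn O p) (hinf : {m | ∃ w, p m w}.Infinite) :
    ∃ f : ℕ → ℕ, RecIn O ↑f ∧ ∀ x, x ≤ f x ∧ ∃ w, p (f x) w := by
  obtain ⟨t, ht, htp⟩ := hp
  have hF : Computable₂ fun q v : ℕ => if q.unpair.1 ≤ q.unpair.2.unpair.1 then v else 1 :=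
    (Primrec.ite (Primrec.nat_le.comp (Primrec.fst.comp (Primrec.unpair.comp Primrec.fst))
      (Primrec.fst.comp (Primrec.unpair.comp
        (Primrec.snd.comp (Primrec.unpair.comp Primrec.fst)))))
      Primrec.snd (Primrec.const 1)).to_comp
  have hp' : DecidableIn O fun x q => x ≤ q.unpair.1 ∧ p q.unpair.1 q.unpair.2 := by
    refine ⟨_, RecIn.computable₂_comp hF
      (RecIn.comp_computable ht (Computable.snd.comp Computable.unpair)), fun x q => ?_⟩
    simp only [Nat.unpair_pair] at *
    split_ifs with hle <;> simp [hle, ← htp]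
  obtain ⟨f, hf, hfp⟩ := hp'.exists_least fun x => by
    obtain ⟨m, ⟨w, hw⟩, hxm⟩ := hinf.exists_gt x
    exact ⟨Nat.pair m w, by simpa using ⟨hxm.le, hw⟩⟩
  exact ⟨fun x => (f x).unpair.1,
    RecIn.computable_comp (Computable.fst.comp Computable.unpair) hf,
    fun x => ⟨(hfp x).1.1, _, (hfp x).1.2⟩⟩

end DecidableIn

def oraclePrefix (O : ℕ → ℕ) (k : ℕ) : List ℕ := (List.range k).map O

theorem oraclePrefix_prefix (O : ℕ → ℕ) {k k' : ℕ} (h : k ≤ k') :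
    oraclePrefix O k <+: oraclePrefix O k' := by
  rw [show oraclePrefix O k = (oraclePrefix O k').take k by
    simp [oraclePrefix, ← List.map_take, List.take_range, Nat.min_eq_left h]]
  exact List.take_prefix _ _

theorem getElem?_oraclePrefix (O : ℕ → ℕ) {k n : ℕ} (h : n < k) :
    (oraclePrefix O k)[n]? = some (O n) := by
  simp [oraclePrefix, List.getElem?_range h]

open Encodable in
theorem RecIn.encode_oraclePrefix (O : ℕ → ℕ) :
    RecIn O ↑(fun k => encode (oraclePrefix O k)) := by
  have hF : Computable₂ fun q v : ℕ =>
      encode ((decode (α := List ℕ) q.unpair.2).getD [] ++ [v]) :=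
    (Primrec.encode.comp (Primrec.list_append.comp
      (Primrec.option_getD.comp (Primrec.decode.comp (Primrec.snd.comp (Primrec.unpair.comp
        Primrec.fst))) (Primrec.const []))
      (Primrec.list_cons.comp Primrec.snd (Primrec.const [])))).to_comp
  refine RecIn.of_succ (RecIn.computable₂_comp hF
    (RecIn.comp_computable .oracle (Computable.fst.comp Computable.unpair))) fun k => ?_
  simp [oraclePrefix, List.range_succ]

open Encodable in
/-- `G ⟪encode σ, n⟫` runs `g n` with the oracle `O` replaced by the finite table `σ`:
this is the use principle. -/
structure OracleApprox (O : ℕ → ℕ) (g G : ℕ →. ℕ) : Prop where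
  partrec : Nat.Partrec G
  mono : ∀ σ τ : List ℕ, σ <+: τ → ∀ n v,
    v ∈ G (Nat.pair (encode σ) n) → v ∈ G (Nat.pair (encode τ) n)
  sound : ∀ k n v, v ∈ G (Nat.pair (encode (oraclePrefix O k)) n) → v ∈ g n
  complete : ∀ n v, v ∈ g n → ∃ k, v ∈ G (Nat.pair (encode (oraclePrefix O k)) n)

theorem Part.mem_natPair_seq {a b : Part ℕ} {v : ℕ} :
    v ∈ (Nat.pair <$> a <*> b) ↔ ∃ x ∈ a, ∃ y ∈ b, v = Nat.pair x y := by
  simp [Seq.seq, Part.mem_map_iff, Part.mem_bind_iff, eq_comm]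

theorem Nat.Partrec.comp_pair_assoc {F : ℕ →. ℕ} (hF : Nat.Partrec F) :
    Nat.Partrec fun q =>
      F (Nat.pair q.unpair.1.unpair.1 (Nat.pair q.unpair.1.unpair.2 q.unpair.2)) :=
  Partrec.nat_iff.1 ((Partrec.nat_iff.2 hF).comp
    (Primrec₂.natPair.comp (Primrec.fst.comp (Primrec.unpair.comp Primrec.fst))
      (Primrec₂.natPair.comp (Primrec.snd.comp (Primrec.unpair.comp Primrec.fst))
        Primrec.snd)).to_comp)

theorem Nat.mem_rfind_of_mem_zero_test {A B : ℕ → Part ℕ} {v : ℕ}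
    (hAB : ∀ n ≤ v, ∀ u ∈ A n, u ∈ B n)
    (hv : v ∈ Nat.rfind fun n => (fun m => m = 0) <$> A n) :
    v ∈ Nat.rfind fun n => (fun m => m = 0) <$> B n := by
  have transfer : ∀ n ≤ v, ∀ b, b ∈ (fun m => decide (m = 0)) <$> A n →
      b ∈ (fun m => decide (m = 0)) <$> B n := by
    intro n hn b hb
    obtain ⟨u, hu, rfl⟩ := (Part.mem_map_iff _).1 hb
    exact Part.mem_map _ (hAB n hn u hu)
  obtain ⟨hfound, hbelow⟩ := Nat.mem_rfind.1 hv
  exact Nat.mem_rfind.2 ⟨transfer v le_rfl _ hfound, fun hm => transfer _ hm.le _ (hbelow hm)⟩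

theorem Nat.dom_of_mem_rfind_zero_test {A : ℕ → Part ℕ} {v : ℕ}
    (hv : v ∈ Nat.rfind fun n => (fun m => m = 0) <$> A n) {n : ℕ} (hn : n ≤ v) : (A n).Dom := by
  obtain ⟨hfound, hbelow⟩ := Nat.mem_rfind.1 hv
  rcases hn.lt_or_eq with hn | rfl
  · exact (Part.dom_iff_mem.2 ⟨_, hbelow hn⟩ : ((fun m => decide (m = 0)) <$> A n).Dom)
  · exact (Part.dom_iff_mem.2 ⟨_, hfound⟩ : ((fun m => decide (m = 0)) <$> A n).Dom)

namespace OracleApprox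

open Encodable

variable {O : ℕ → ℕ} {f g F G : ℕ →. ℕ}

theorem mem_of_le (hG : OracleApprox O g G) {k k' n v : ℕ} (hk : k ≤ k')
    (hv : v ∈ G (Nat.pair (encode (oraclePrefix O k)) n)) :
    v ∈ G (Nat.pair (encode (oraclePrefix O k')) n) :=
  hG.mono _ _ (oraclePrefix_prefix O hk) n v hv

theorem of_partrec (hg : Nat.Partrec g) : OracleApprox O g fun p => g p.unpair.2 where
  partrec := Partrec.nat_iff.1 ((Partrec.nat_iff.2 hg).comp (Computable.snd.comp Computable.unpair))
  mono _ _ _ n v hv := by simpa using hv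
  sound _ n v hv := by simpa using hv
  complete n v hv := ⟨0, by simpa using hv⟩

theorem oracle : OracleApprox O ↑O fun p =>
    Part.ofOption ((decode (α := List ℕ) p.unpair.1).bind fun l => l[p.unpair.2]?) where
  partrec := Partrec.nat_iff.1 <| Computable.ofOption <|
    (Computable.decode.comp (Computable.fst.comp Computable.unpair)).option_bind
      (Primrec.list_getElem?.comp Primrec.snd
        (Primrec.snd.comp (Primrec.unpair.comp Primrec.fst))).to_comp.to₂
  mono σ τ := by
    rintro ⟨t, rfl⟩ n v hv
    simp only [Part.mem_ofOption, Option.mem_def, Nat.unpair_pair, encodek, Option.bind_some]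
      at hv ⊢
    rwa [List.getElem?_append_left (List.getElem?_eq_some_iff.1 hv).1]
  sound k n v hv := by
    simp only [Part.mem_ofOption, Option.mem_def, Nat.unpair_pair, encodek, Option.bind_some]
      at hv
    have hn : n < k := by simpa [oraclePrefix] using (List.getElem?_eq_some_iff.1 hv).1
    rw [getElem?_oraclePrefix O hn, Option.some_inj] at hv
    simp [PFun.coe_val, hv]
  complete n v hv := ⟨n + 1, by
    simp only [PFun.coe_val, Part.mem_some_iff] at hv
    simp [getElem?_oraclePrefix O (Nat.lt_succ_self n), hv]⟩

theorem pair (hF : OracleApprox O f F) (hG : OracleApprox O g G) :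
    OracleApprox O (fun n => Nat.pair <$> f n <*> g n) fun p => Nat.pair <$> F p <*> G p where
  partrec := .pair hF.partrec hG.partrec
  mono σ τ hστ n v hv := by
    obtain ⟨x, hx, y, hy, rfl⟩ := Part.mem_natPair_seq.1 hv
    exact Part.mem_natPair_seq.2 ⟨x, hF.mono σ τ hστ _ _ hx, y, hG.mono σ τ hστ _ _ hy, rfl⟩
  sound k n v hv := by
    obtain ⟨x, hx, y, hy, rfl⟩ := Part.mem_natPair_seq.1 hv
    exact Part.mem_natPair_seq.2 ⟨x, hF.sound _ _ _ hx, y, hG.sound _ _ _ hy, rfl⟩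
  complete n v hv := by
    obtain ⟨x, hx, y, hy, rfl⟩ := Part.mem_natPair_seq.1 hv
    obtain ⟨k₁, hk₁⟩ := hF.complete _ _ hx
    obtain ⟨k₂, hk₂⟩ := hG.complete _ _ hy
    exact ⟨max k₁ k₂, Part.mem_natPair_seq.2 ⟨x, hF.mem_of_le (le_max_left k₁ k₂) hk₁,
      y, hG.mem_of_le (le_max_right k₁ k₂) hk₂, rfl⟩⟩

theorem comp (hF : OracleApprox O f F) (hG : OracleApprox O g G) :
    OracleApprox O (fun n => g n >>= f) fun p => G p >>= fun m => F (Nat.pair p.unpair.1 m) where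
  partrec := Partrec.nat_iff.1 <| (Partrec.nat_iff.2 hG.partrec).bind
    ((Partrec.nat_iff.2 hF.partrec).comp
      (Primrec₂.natPair.comp (Primrec.fst.comp (Primrec.unpair.comp Primrec.fst))
        Primrec.snd).to_comp).to₂
  mono σ τ hστ n v hv := by
    obtain ⟨m, hm, hv⟩ := Part.mem_bind_iff.1 hv
    exact Part.mem_bind_iff.2
      ⟨m, hG.mono σ τ hστ _ _ hm, by simpa using hF.mono σ τ hστ _ _ (by simpa using hv)⟩
  sound k n v hv := by
    obtain ⟨m, hm, hv⟩ := Part.mem_bind_iff.1 hv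
    exact Part.mem_bind_iff.2 ⟨m, hG.sound _ _ _ hm, hF.sound _ _ _ (by simpa using hv)⟩
  complete n v hv := by
    obtain ⟨m, hm, hv⟩ := Part.mem_bind_iff.1 hv
    obtain ⟨k₁, hk₁⟩ := hG.complete _ _ hm
    obtain ⟨k₂, hk₂⟩ := hF.complete _ _ hv
    exact ⟨max k₁ k₂, Part.mem_bind_iff.2 ⟨m, hG.mem_of_le (le_max_left k₁ k₂) hk₁,
      by simpa using hF.mem_of_le (le_max_right k₁ k₂) hk₂⟩⟩

theorem prec (hF : OracleApprox O f F) (hG : OracleApprox O g G) :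
    OracleApprox O (Nat.unpaired fun a n =>
        n.rec (f a) fun y IH => do let i ← IH; g (Nat.pair a (Nat.pair y i)))
      fun p => Nat.rec (F (Nat.pair p.unpair.1 p.unpair.2.unpair.1))
        (fun y IH => IH.bind fun i =>
          G (Nat.pair p.unpair.1 (Nat.pair p.unpair.2.unpair.1 (Nat.pair y i))))
        p.unpair.2.unpair.2 := by
  have iter_mono : ∀ σ τ : List ℕ, σ <+: τ → ∀ a M v,
      v ∈ (Nat.rec (F (Nat.pair (encode σ) a))
        (fun y IH => IH.bind fun i => G (Nat.pair (encode σ) (Nat.pair a (Nat.pair y i)))) M :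
          Part ℕ) →
      v ∈ (Nat.rec (F (Nat.pair (encode τ) a))
        (fun y IH => IH.bind fun i => G (Nat.pair (encode τ) (Nat.pair a (Nat.pair y i)))) M :
          Part ℕ) := by
    intro σ τ hστ a M
    induction M with
    | zero => exact hF.mono σ τ hστ a
    | succ m ih =>
      intro v hv
      obtain ⟨i, hi, hv⟩ := Part.mem_bind_iff.1 hv
      exact Part.mem_bind_iff.2 ⟨i, ih _ hi, hG.mono σ τ hστ _ _ hv⟩
  refine ⟨?_, fun σ τ hστ n v hv => ?_, fun k n v hv => ?_, fun n v hv => ?_⟩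
  · refine (Partrec.nat_iff.1 ((Partrec.nat_iff.2
      (Nat.Partrec.prec hF.partrec hG.partrec.comp_pair_assoc)).comp
      (Primrec₂.natPair.comp (Primrec₂.natPair.comp (Primrec.fst.comp Primrec.unpair)
        (Primrec.fst.comp (Primrec.unpair.comp (Primrec.snd.comp Primrec.unpair))))
        (Primrec.snd.comp (Primrec.unpair.comp
          (Primrec.snd.comp Primrec.unpair)))).to_comp)).of_eq fun p => ?_
    simp [Nat.unpaired, Part.bind_eq_bind]
  · simp only [Nat.unpair_pair] at hv ⊢
    exact iter_mono σ τ hστ _ _ v hv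
  · simp only [Nat.unpair_pair] at hv
    simp only [Nat.unpaired]
    generalize n.unpair.1 = a at hv ⊢
    generalize n.unpair.2 = M at hv ⊢
    induction M generalizing v with
    | zero => exact hF.sound _ _ _ hv
    | succ m ih =>
      obtain ⟨i, hi, hv⟩ := Part.mem_bind_iff.1 hv
      exact Part.mem_bind_iff.2 ⟨i, ih _ hi, hG.sound _ _ _ hv⟩
  · simp only [Nat.unpaired] at hv
    simp only [Nat.unpair_pair]
    generalize n.unpair.1 = a at hv ⊢
    generalize n.unpair.2 = M at hv ⊢
    induction M generalizing v with
    | zero => exact hF.complete _ _ hv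
    | succ m ih =>
      obtain ⟨i, hi, hv⟩ := Part.mem_bind_iff.1 hv
      obtain ⟨k₁, hk₁⟩ := ih _ hi
      obtain ⟨k₂, hk₂⟩ := hG.complete _ _ hv
      exact ⟨max k₁ k₂, Part.mem_bind_iff.2
        ⟨i, iter_mono _ _ (oraclePrefix_prefix O (le_max_left k₁ k₂)) _ _ _ hk₁,
          hG.mem_of_le (le_max_right k₁ k₂) hk₂⟩⟩

theorem rfind (hF : OracleApprox O f F) :
    OracleApprox O (fun a => Nat.rfind fun n => (fun m => m = 0) <$> f (Nat.pair a n))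
      fun p => Nat.rfind fun n =>
        (fun m => m = 0) <$> F (Nat.pair p.unpair.1 (Nat.pair p.unpair.2 n)) := by
  refine ⟨?_, fun σ τ hστ a v hv => ?_, fun k a v hv => ?_, fun a v hv => ?_⟩
  · exact (Nat.Partrec.rfind hF.partrec.comp_pair_assoc).of_eq fun p => by simp
  · simp only [Nat.unpair_pair] at hv ⊢
    exact Nat.mem_rfind_of_mem_zero_test (fun n _ => hF.mono σ τ hστ _) hv
  · simp only [Nat.unpair_pair] at hv
    exact Nat.mem_rfind_of_mem_zero_test (fun n _ => hF.sound k _) hv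
  · have hK : ∀ n, ∃ k, n ≤ v →
        ∀ u ∈ f (Nat.pair a n), u ∈ F (Nat.pair (encode (oraclePrefix O k)) (Nat.pair a n)) := by
      intro n
      by_cases hn : n ≤ v
      · obtain ⟨u₀, hu₀⟩ := Part.dom_iff_mem.1 (Nat.dom_of_mem_rfind_zero_test hv hn)
        obtain ⟨k, hk⟩ := hF.complete _ _ hu₀
        exact ⟨k, fun _ u hu => Part.mem_unique hu₀ hu ▸ hk⟩
      · exact ⟨0, fun h => absurd h hn⟩
    choose K hK using hK
    refine ⟨(Finset.range (v + 1)).sup K, ?_⟩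
    simp only [Nat.unpair_pair]
    refine Nat.mem_rfind_of_mem_zero_test (fun n hn u hu => ?_) hv
    exact hF.mem_of_le (Finset.le_sup (Finset.mem_range.2 (Nat.lt_succ_of_le hn)))
      (hK n hn u hu)

end OracleApprox

theorem RecIn.exists_oracleApprox {O : ℕ → ℕ} {g : ℕ →. ℕ} (hg : RecIn O g) :
    ∃ G, OracleApprox O g G := by
  induction hg with
  | oracle => exact ⟨_, .oracle⟩
  | zero => exact ⟨_, .of_partrec .zero⟩
  | succ => exact ⟨_, .of_partrec .succ⟩
  | left => exact ⟨_, .of_partrec .left⟩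
  | right => exact ⟨_, .of_partrec .right⟩
  | pair _ _ ihf ihg => exact ⟨_, ihf.choose_spec.pair ihg.choose_spec⟩
  | comp _ _ ihf ihg => exact ⟨_, ihf.choose_spec.comp ihg.choose_spec⟩
  | prec _ _ ihf ihg => exact ⟨_, ihf.choose_spec.prec ihg.choose_spec⟩
  | rfind _ ihf => exact ⟨_, ihf.choose_spec.rfind⟩

open Encodable Nat.Partrec.Code in
/-- Normal form of `O`-c.e. sets: the witness `w = ⟪k, s⟫` is an oracle prefix length `k` and
a step bound `s` for the approximating partial recursive function. -/
theorem RecIn.exists_decidableIn_dom {O : ℕ → ℕ} {g : ℕ →. ℕ} (hg : RecIn O g) :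
    ∃ p, DecidableIn O p ∧ ∀ n, (g n).Dom ↔ ∃ w, p n w := by
  obtain ⟨G, hG⟩ := hg.exists_oracleApprox
  obtain ⟨c, hc⟩ := Nat.Partrec.Code.exists_code.1 hG.partrec
  refine ⟨fun n w =>
      (evaln w.unpair.2 c (Nat.pair (encode (oraclePrefix O w.unpair.1)) n)).isSome,
    ⟨fun q => if (evaln q.unpair.2.unpair.2 c
        (Nat.pair (encode (oraclePrefix O q.unpair.2.unpair.1)) q.unpair.1)).isSome then 0 else 1,
      ?_, fun n w => by simp only [Nat.unpair_pair]; split_ifs <;> simp_all⟩, fun n => ?_⟩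
  · have hF : Computable₂ fun (q e : ℕ) =>
        if (evaln q.unpair.2.unpair.2 c (Nat.pair e q.unpair.1)).isSome then 0 else 1 :=
      (Primrec.ite (Primrec.eq.comp (Primrec.option_isSome.comp (primrec_evaln.comp
        (((Primrec.snd.comp (Primrec.unpair.comp (Primrec.snd.comp
          (Primrec.unpair.comp Primrec.fst)))).pair (Primrec.const c)).pair
          (Primrec₂.natPair.comp Primrec.snd (Primrec.fst.comp (Primrec.unpair.comp
            Primrec.fst)))))) (Primrec.const true))
        (Primrec.const 0) (Primrec.const 1)).to_comp
    have hprefix : RecIn O ↑fun q : ℕ => encode (oraclePrefix O q.unpair.2.unpair.1) :=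
      RecIn.comp_computable (RecIn.encode_oraclePrefix O)
        (Computable.fst.comp (Computable.unpair.comp (Computable.snd.comp Computable.unpair)))
    exact (RecIn.computable₂_comp hF hprefix).of_eq fun q => rfl
  · constructor
    · intro hn
      obtain ⟨v, hv⟩ := Part.dom_iff_mem.1 hn
      obtain ⟨k, hk⟩ := hG.complete n v hv
      rw [← hc] at hk
      obtain ⟨s, hs⟩ := evaln_complete.1 hk
      exact ⟨Nat.pair k s, by simpa using Option.isSome_iff_exists.2 ⟨v, hs⟩⟩
    · rintro ⟨w, hw⟩
      obtain ⟨v, hv⟩ := Option.isSome_iff_exists.1 hw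
      have hmem := evaln_sound hv
      rw [hc] at hmem
      exact Part.dom_iff_mem.2 ⟨v, hG.sound _ _ _ hmem⟩

theorem CeIn.exists_strictMono {O : ℕ → ℕ} {A : Set ℕ} (hA : CeIn O A) (hinf : A.Infinite) :
    ∃ b : ℕ → ℕ, RecIn O ↑b ∧ StrictMono b ∧ ∀ i, b i ∈ A := by
  obtain ⟨g, hg, hgA⟩ := hA
  obtain ⟨p, hp, hdom⟩ := hg.exists_decidableIn_dom
  have hAp : A = {m | ∃ w, p m w} := Set.ext fun m => (hgA m).trans (hdom m)
  obtain ⟨h, hh, hhA⟩ := hp.exists_ge (hAp ▸ hinf)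
  let b : ℕ → ℕ := fun i => Nat.rec (h 0) (fun _ IH => h (IH + 1)) i
  have hbA : ∀ i, b i ∈ A := by
    rw [hAp]
    rintro (_ | i) <;> exact (hhA _).2
  refine ⟨b, RecIn.of_succ (step := fun q => h (q.unpair.2 + 1))
    (RecIn.comp_computable hh (Computable.succ.comp (Computable.snd.comp Computable.unpair)))
    (fun k => by simp [b]), strictMono_nat_of_lt_succ fun i => (hhA _).1, hbA⟩

theorem exists_recIn_chi_rep {S : ℕ → ℕ → Prop} (hS : Equivalence S) :
    ∃ m : ℕ → ℕ, RecIn (chi S) ↑m ∧ ∀ x y, S x y ↔ m x = m y := by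
  obtain ⟨m, hm, hmS⟩ := (decidableIn_chi S).exists_least fun x => ⟨x, hS.refl x⟩
  refine ⟨m, hm, fun x y =>
    ⟨fun hxy => ?_, fun he => hS.trans (hmS x).1 (hS.symm (he ▸ (hmS y).1))⟩⟩
  have hclass : ∀ n, S x n ↔ S y n := fun n => ⟨hS.trans (hS.symm hxy), hS.trans hxy⟩
  exact le_antisymm (not_lt.1 fun hlt => (hmS x).2 _ hlt ((hclass _).2 (hmS y).1))
    (not_lt.1 fun hlt => (hmS y).2 _ hlt ((hclass _).1 (hmS x).1))

theorem not_Sdark_implies_reduction_general (R S : ℕ → ℕ → Prop)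
    (hR : Equivalence R) (hS : Equivalence S)
    (h : ∃ A : Set ℕ, A.Infinite ∧ CeIn (chi S) A ∧
      ∀ x ∈ A, ∀ y ∈ A, x ≠ y → ¬ R x y) :
    ∃ f : ℕ → ℕ, RecIn (chi S) (f : ℕ →. ℕ) ∧ ∀ x y, S x y ↔ R (f x) (f y) := by
  obtain ⟨A, hAinf, hAce, hAtr⟩ := h
  obtain ⟨b, hb, hbmono, hbA⟩ := hAce.exists_strictMono hAinf
  obtain ⟨m, hm, hSm⟩ := exists_recIn_chi_rep hS
  refine ⟨fun x => b (m x), RecIn.total_comp hb hm, fun x y => ?_⟩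
  rw [hSm]
  refine ⟨fun he => by simp only [he]; exact hR.refl _, fun hr => ?_⟩
  by_contra hne
  exact hAtr _ (hbA _) _ (hbA _) (hbmono.injective.ne hne) hr

theorem not_Sdark_implies_reduction (R S : ℕ → ℕ → Prop)
    (hR : Equivalence R) (hS : Equivalence S)
    (hRinf : InfClasses R) (hSinf : InfClasses S)
    (h : ∃ A : Set ℕ, A.Infinite ∧ CeIn (chi S) A ∧
      ∀ x ∈ A, ∀ y ∈ A, x ≠ y → ¬ R x y) :
    ∃ f : ℕ → ℕ, RecIn (chi S) (f : ℕ →. ℕ) ∧ ∀ x y, S x y ↔ R (f x) (f y) :=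
  not_Sdark_implies_reduction_general R S hR hS h
end
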